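/- arXiv:2011.14391 — 2 statements merged into one kernel-verified Lean document; each statement's English description precedes it below -/
import Mathlib

section
/- Series form of the cost-difference (value-difference) lemma: for any two stable gains θ and θ′, writing Δ := θ − θ′ and G′ := R + γ Bᵀ M(θ′) B, one has M(θ) − M(θ′) = ∑_{t=0}^∞ γᵗ (C_θᵀ)ᵗ [ Δᵀ E_{θ′} + E_{θ′}ᵀ Δ + Δᵀ G′ Δ ] C_θᵗ, with the series converging in norm. -/
open Matrix
open scoped Matrix.Norms.L2Operator

noncomputable section

/-- The closed-loop matrix `C_θ = A - B θ`. -/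
def Cl {dx du : ℕ} (A : Matrix (Fin dx) (Fin dx) ℝ) (B : Matrix (Fin dx) (Fin du) ℝ)
    (θ : Matrix (Fin du) (Fin dx) ℝ) : Matrix (Fin dx) (Fin dx) ℝ :=
  A - B * θ

/-- A closed-loop matrix `C` is stable (for discount factor `γ`) if
`‖C^t‖ ≤ c rᵗ γ^{-t/2}` (L2 operator norm) for some `c > 0` and `r ∈ (0,1)`. -/
def IsStable (γ : ℝ) {dx : ℕ} (C : Matrix (Fin dx) (Fin dx) ℝ) : Prop :=
  ∃ c > (0:ℝ), ∃ r ∈ Set.Ioo (0:ℝ) 1, ∀ t : ℕ, ‖C ^ t‖ ≤ c * r ^ t * γ ^ (-(t : ℝ) / 2)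

/-- `M(θ) := ∑_{t=0}^∞ γᵗ (C_θᵀ)ᵗ (Q + θᵀ R θ) C_θᵗ`. -/
def Mmat {dx du : ℕ} (γ : ℝ) (A : Matrix (Fin dx) (Fin dx) ℝ) (B : Matrix (Fin dx) (Fin du) ℝ)
    (Q : Matrix (Fin dx) (Fin dx) ℝ) (R : Matrix (Fin du) (Fin du) ℝ)
    (θ : Matrix (Fin du) (Fin dx) ℝ) : Matrix (Fin dx) (Fin dx) ℝ :=
  ∑' t : ℕ, γ ^ t • ((Cl A B θ)ᵀ ^ t * (Q + θᵀ * R * θ) * Cl A B θ ^ t)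

/-- `Σ_θ := (1-γ) ∑_{t=0}^∞ γᵗ C_θᵗ Σ₁ (C_θᵀ)ᵗ`. -/
def SigMat {dx du : ℕ} (γ : ℝ) (A : Matrix (Fin dx) (Fin dx) ℝ) (B : Matrix (Fin dx) (Fin du) ℝ)
    (S1 : Matrix (Fin dx) (Fin dx) ℝ) (θ : Matrix (Fin du) (Fin dx) ℝ) :
    Matrix (Fin dx) (Fin dx) ℝ :=
  (1 - γ) • ∑' t : ℕ, γ ^ t • (Cl A B θ ^ t * S1 * (Cl A B θ)ᵀ ^ t)

/-- `E_θ := (R + γ Bᵀ M(θ) B) θ - γ Bᵀ M(θ) A`. -/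
def Emat {dx du : ℕ} (γ : ℝ) (A : Matrix (Fin dx) (Fin dx) ℝ) (B : Matrix (Fin dx) (Fin du) ℝ)
    (Q : Matrix (Fin dx) (Fin dx) ℝ) (R : Matrix (Fin du) (Fin du) ℝ)
    (θ : Matrix (Fin du) (Fin dx) ℝ) : Matrix (Fin du) (Fin dx) ℝ :=
  (R + γ • (Bᵀ * Mmat γ A B Q R θ * B)) * θ - γ • (Bᵀ * Mmat γ A B Q R θ * A)

/-- `J(θ) := (1-γ) tr(M(θ) Σ₁)`. -/
def Jcost {dx du : ℕ} (γ : ℝ) (A : Matrix (Fin dx) (Fin dx) ℝ) (B : Matrix (Fin dx) (Fin du) ℝ)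
    (Q : Matrix (Fin dx) (Fin dx) ℝ) (R : Matrix (Fin du) (Fin du) ℝ)
    (S1 : Matrix (Fin dx) (Fin dx) ℝ) (θ : Matrix (Fin du) (Fin dx) ℝ) : ℝ :=
  (1 - γ) * (Mmat γ A B Q R θ * S1).trace

/-- The smallest singular value of a square matrix, as the infimum of `‖Ax‖` over unit vectors. -/
def sigmaMin {m : Type*} [Fintype m] [DecidableEq m] (A : Matrix m m ℝ) : ℝ :=
  ⨅ x : {x : EuclideanSpace ℝ m // ‖x‖ = 1}, ‖Matrix.toEuclideanLin A x.1‖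

/-- The Frobenius norm of a matrix. -/
def frobNorm {m n : Type*} [Fintype m] [Fintype n] (A : Matrix m n ℝ) : ℝ :=
  Real.sqrt (∑ i, ∑ j, A i j ^ 2)

/-! The Bellman equation `M(θ') = Q + θ'ᵀRθ' + γ C_θ'ᵀ M(θ') C_θ'` and the symmetry of `R` and
`M(θ')` turn the bracket into `(Q + θᵀRθ) + (γ C_θᵀ M(θ') C_θ - M(θ'))`. Summed along `C_θ`, the
first part gives `M(θ)` and the second telescopes to `-M(θ')`. Stability makes the terms decay
like `c² r^{2t}`, which gives convergence in norm. -/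

theorem HasSum.sub_nat_succ {G : Type*} [AddCommGroup G] [TopologicalSpace G]
    [IsTopologicalAddGroup G] {g : ℕ → G} {a : G} (h : HasSum g a) :
    HasSum (fun t ↦ g (t + 1) - g t) (-g 0) := by
  have hshift : HasSum (fun t ↦ g (t + 1)) (a - g 0) := by
    simpa using (hasSum_nat_add_iff' 1).mpr h
  simpa using hshift.sub h

theorem Matrix.l2_opNorm_transpose {m n : Type*} [Fintype m] [Fintype n] [DecidableEq m]
    [DecidableEq n] (X : Matrix m n ℝ) : ‖Xᵀ‖ = ‖X‖ := by
  rw [← conjTranspose_eq_transpose_of_trivial, l2_opNorm_conjTranspose]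

namespace IsStable

variable {n : ℕ} {γ : ℝ} {C : Matrix (Fin n) (Fin n) ℝ}

theorem norm_smul_conj_le (hγ : 0 < γ) {c r : ℝ}
    (hC : ∀ t : ℕ, ‖C ^ t‖ ≤ c * r ^ t * γ ^ (-(t : ℝ) / 2))
    (X : Matrix (Fin n) (Fin n) ℝ) (t : ℕ) :
    ‖γ ^ t • (Cᵀ ^ t * X * C ^ t)‖ ≤ c ^ 2 * ‖X‖ * (r ^ 2) ^ t := by
  have hCt : ‖Cᵀ ^ t‖ = ‖C ^ t‖ := by rw [← transpose_pow, Matrix.l2_opNorm_transpose]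
  have hγt : γ ^ t * (γ ^ (-(t : ℝ) / 2)) ^ 2 = 1 := by
    rw [← Real.rpow_natCast, ← Real.rpow_mul_natCast hγ.le, ← Real.rpow_add hγ]
    norm_num
  have hc : 0 ≤ c * r ^ t * γ ^ (-(t : ℝ) / 2) := (norm_nonneg _).trans (hC t)
  calc ‖γ ^ t • (Cᵀ ^ t * X * C ^ t)‖ ≤ γ ^ t * (‖Cᵀ ^ t‖ * ‖X‖ * ‖C ^ t‖) := by
        rw [norm_smul, Real.norm_of_nonneg (by positivity)]
        gcongr
        exact norm_mul₃_le
    _ ≤ γ ^ t * ((c * r ^ t * γ ^ (-(t : ℝ) / 2)) * ‖X‖ * (c * r ^ t * γ ^ (-(t : ℝ) / 2))) := by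
        rw [hCt]
        gcongr <;> exact hC t
    _ = c ^ 2 * ‖X‖ * (r ^ 2) ^ t * (γ ^ t * (γ ^ (-(t : ℝ) / 2)) ^ 2) := by ring
    _ = c ^ 2 * ‖X‖ * (r ^ 2) ^ t := by rw [hγt, mul_one]

theorem summable_norm_smul_conj (hγ : 0 < γ) (hC : IsStable γ C)
    (X : Matrix (Fin n) (Fin n) ℝ) :
    Summable fun t : ℕ ↦ ‖γ ^ t • (Cᵀ ^ t * X * C ^ t)‖ := by
  obtain ⟨c, -, r, hr, hCt⟩ := hC
  refine .of_nonneg_of_le (fun _ ↦ norm_nonneg _) (norm_smul_conj_le hγ hCt X) ?_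
  exact (summable_geometric_of_lt_one (by positivity) (by nlinarith [hr.1, hr.2])).mul_left _

theorem hasSum_smul_conj_sub (hγ : 0 < γ) (hC : IsStable γ C)
    (X : Matrix (Fin n) (Fin n) ℝ) :
    HasSum (fun t : ℕ ↦ γ ^ t • (Cᵀ ^ t * (γ • (Cᵀ * X * C) - X) * C ^ t)) (-X) := by
  have htel := (hC.summable_norm_smul_conj hγ X).of_norm.hasSum.sub_nat_succ
  simp only [pow_zero, one_smul, Matrix.mul_one, Matrix.one_mul] at htel
  refine htel.congr_fun fun t ↦ ?_
  rw [Matrix.mul_sub, Matrix.sub_mul, smul_sub, pow_succ γ, pow_succ Cᵀ, pow_succ' C,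
    Matrix.mul_smul, Matrix.smul_mul, smul_smul]
  simp only [Matrix.mul_assoc]

theorem tsum_smul_conj_eq (hγ : 0 < γ) (hC : IsStable γ C) (X : Matrix (Fin n) (Fin n) ℝ) :
    ∑' t : ℕ, γ ^ t • (Cᵀ ^ t * X * C ^ t)
      = X + γ • (Cᵀ * (∑' t : ℕ, γ ^ t • (Cᵀ ^ t * X * C ^ t)) * C) := by
  have hsum := (hC.summable_norm_smul_conj hγ X).of_norm.hasSum
  have hshift := (hasSum_nat_add_iff' 1).mpr hsum
  have hconj := ((hsum.mul_left Cᵀ).mul_right C).const_smul γ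
  simp only [Finset.range_one, Finset.sum_singleton, pow_zero, one_smul, Matrix.one_mul,
    Matrix.mul_one] at hshift
  refine eq_add_of_sub_eq' (hshift.unique (hconj.congr_fun fun t ↦ ?_))
  rw [pow_succ' γ, pow_succ' Cᵀ, pow_succ C, Matrix.mul_smul, Matrix.smul_mul, smul_smul]
  simp only [Matrix.mul_assoc]

end IsStable

theorem bellman_rhs_sub_eq {dx du : ℕ} (γ : ℝ) (A : Matrix (Fin dx) (Fin dx) ℝ)
    (B : Matrix (Fin dx) (Fin du) ℝ) {R : Matrix (Fin du) (Fin du) ℝ} (hR : Rᵀ = R)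
    {M : Matrix (Fin dx) (Fin dx) ℝ} (hM : Mᵀ = M) (θ θ' : Matrix (Fin du) (Fin dx) ℝ) :
    (θ - θ')ᵀ * ((R + γ • (Bᵀ * M * B)) * θ' - γ • (Bᵀ * M * A))
        + ((R + γ • (Bᵀ * M * B)) * θ' - γ • (Bᵀ * M * A))ᵀ * (θ - θ')
        + (θ - θ')ᵀ * (R + γ • (Bᵀ * M * B)) * (θ - θ')
      = θᵀ * R * θ + γ • ((Cl A B θ)ᵀ * M * Cl A B θ)
        - (θ'ᵀ * R * θ' + γ • ((Cl A B θ')ᵀ * M * Cl A B θ')) := by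
  simp only [Cl, transpose_sub, transpose_add, transpose_mul, transpose_smul,
    transpose_transpose, hR, hM, Matrix.sub_mul, Matrix.mul_sub, Matrix.add_mul,
    Matrix.mul_add, Matrix.smul_mul, Matrix.mul_smul, smul_sub, Matrix.mul_assoc]
  abel

section

variable {dx du : ℕ} {γ : ℝ} {A : Matrix (Fin dx) (Fin dx) ℝ} {B : Matrix (Fin dx) (Fin du) ℝ}
  {Q : Matrix (Fin dx) (Fin dx) ℝ} {R : Matrix (Fin du) (Fin du) ℝ}

theorem Mmat_transpose (hQ : Qᵀ = Q) (hR : Rᵀ = R) (θ : Matrix (Fin du) (Fin dx) ℝ) :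
    (Mmat γ A B Q R θ)ᵀ = Mmat γ A B Q R θ := by
  simp only [Mmat, transpose_tsum, transpose_smul, transpose_mul, transpose_pow,
    transpose_transpose, transpose_add, hQ, hR, Matrix.mul_assoc]

theorem Mmat_eq_add_smul_conj (hγ : 0 < γ) {θ : Matrix (Fin du) (Fin dx) ℝ}
    (hθ : IsStable γ (Cl A B θ)) :
    Mmat γ A B Q R θ = Q + θᵀ * R * θ
      + γ • ((Cl A B θ)ᵀ * Mmat γ A B Q R θ * Cl A B θ) :=
  hθ.tsum_smul_conj_eq hγ _

end

/-- Series form of the cost-difference (value-difference) lemma: for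
stable gains `θ, θ′`, with `Δ = θ − θ′` and `G′ = R + γ Bᵀ M(θ′) B`,
`M(θ) − M(θ′) = ∑_{t=0}^∞ γᵗ (C_θᵀ)ᵗ [Δᵀ E_{θ′} + E_{θ′}ᵀ Δ + Δᵀ G′ Δ] C_θᵗ`,
the series converging in norm. -/
theorem cost_difference_series_form
    {dx du : ℕ} (γ : ℝ) (hγ : γ ∈ Set.Ioo (0:ℝ) 1)
    (A : Matrix (Fin dx) (Fin dx) ℝ) (B : Matrix (Fin dx) (Fin du) ℝ)
    (Q : Matrix (Fin dx) (Fin dx) ℝ) (R : Matrix (Fin du) (Fin du) ℝ)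
    (hQ : Qᵀ = Q) (hR : Rᵀ = R)
    (θ θ' : Matrix (Fin du) (Fin dx) ℝ)
    (hθ : IsStable γ (Cl A B θ)) (hθ' : IsStable γ (Cl A B θ')) :
    Summable (fun t : ℕ => ‖γ ^ t • ((Cl A B θ)ᵀ ^ t *
        ((θ - θ')ᵀ * Emat γ A B Q R θ' + (Emat γ A B Q R θ')ᵀ * (θ - θ')
          + (θ - θ')ᵀ * (R + γ • (Bᵀ * Mmat γ A B Q R θ' * B)) * (θ - θ')) *
        Cl A B θ ^ t)‖)
    ∧ HasSum (fun t : ℕ => γ ^ t • ((Cl A B θ)ᵀ ^ t *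
        ((θ - θ')ᵀ * Emat γ A B Q R θ' + (Emat γ A B Q R θ')ᵀ * (θ - θ')
          + (θ - θ')ᵀ * (R + γ • (Bᵀ * Mmat γ A B Q R θ' * B)) * (θ - θ')) *
        Cl A B θ ^ t))
        (Mmat γ A B Q R θ - Mmat γ A B Q R θ') := by
  set M' := Mmat γ A B Q R θ'
  set C := Cl A B θ
  have hD : (θ - θ')ᵀ * Emat γ A B Q R θ' + (Emat γ A B Q R θ')ᵀ * (θ - θ')
      + (θ - θ')ᵀ * (R + γ • (Bᵀ * M' * B)) * (θ - θ')
      = Q + θᵀ * R * θ + (γ • (Cᵀ * M' * C) - M') :=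
    calc _ = θᵀ * R * θ + γ • (Cᵀ * M' * C)
          - (θ'ᵀ * R * θ' + γ • ((Cl A B θ')ᵀ * M' * Cl A B θ')) :=
          bellman_rhs_sub_eq γ A B hR (Mmat_transpose hQ hR θ') θ θ'
      _ = Q + θᵀ * R * θ + (γ • (Cᵀ * M' * C)
          - (Q + θ'ᵀ * R * θ' + γ • ((Cl A B θ')ᵀ * M' * Cl A B θ'))) := by abel
      _ = Q + θᵀ * R * θ + (γ • (Cᵀ * M' * C) - M') := by
          rw [← Mmat_eq_add_smul_conj hγ.1 hθ']
  refine ⟨hθ.summable_norm_smul_conj hγ.1 _, ?_⟩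
  have hM : HasSum (fun t : ℕ ↦ γ ^ t • (Cᵀ ^ t * (Q + θᵀ * R * θ) * C ^ t)) (Mmat γ A B Q R θ) :=
    (hθ.summable_norm_smul_conj hγ.1 _).of_norm.hasSum
  rw [hD]
  simpa only [Matrix.mul_add, Matrix.add_mul, smul_add, ← sub_eq_add_neg] using
    hM.add (hθ.hasSum_smul_conj_sub hγ.1 M')
end
end

section
/- Gradient domination core inequality: assume Q is positive semidefinite, R is positive definite, and Σ₁ is positive semidefinite. Then for any two stable gains θ and θ*, writing G := R + γ Bᵀ M(θ) B (which is positive definite), one has J(θ) − J(θ*) ≤ tr( Σ_{θ*} E_θᵀ G^{−1} E_θ ) ≤ ( ‖Σ_{θ*}‖ / σ_min(R) ) · tr( E_θᵀ E_θ ), where σ_min denotes the smallest singular value and ‖·‖ the operator norm. -/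
open Matrix
open scoped Matrix.Norms.L2Operator

noncomputable section

/-!
Write `M = M(θ)`, `G = R + γ BᵀMB` and `E = E_θ`. Comparing the Lyapunov series of `θ*` with an
arbitrary value matrix `P` gives `J(θ*) = (1-γ) tr(P Σ₁) + tr((T_{θ*} P - P) Σ_{θ*})`, where
`T_{θ*} P = Q + θ*ᵀRθ* + γ C_{θ*}ᵀ P C_{θ*}` is the Bellman operator of `θ*`. For `P = M`, a fixed
point of `T_θ`, the residual `T_{θ*} M - T_θ M` is quadratic in `D = θ* - θ`, and completing the
square turns it into `(D + G⁻¹E)ᵀ G (D + G⁻¹E) - Eᵀ G⁻¹ E`. The square has nonnegative trace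
against `Σ_{θ*} ⪰ 0`, which is the first inequality; the second follows from
`G ⪰ R ⪰ σ_min(R) I`, hence `G⁻¹ ⪯ σ_min(R)⁻¹ I`, and from `Σ_{θ*} ⪯ ‖Σ_{θ*}‖ I`.
-/

open scoped MatrixOrder

namespace Matrix

variable {m n : Type*}

lemma l2_opNorm_transpose_s10 [Fintype m] [Fintype n] [DecidableEq m] [DecidableEq n]
    (A : Matrix m n ℝ) : ‖Aᵀ‖ = ‖A‖ := by
  rw [← conjTranspose_eq_transpose_of_trivial, l2_opNorm_conjTranspose]

lemma PosSemidef.transpose_eq {M : Matrix n n ℝ} (hM : M.PosSemidef) : Mᵀ = M := by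
  simpa using hM.1.eq

variable [Fintype m] [Fintype n]

lemma PosSemidef.transpose_mul_mul_same {M : Matrix n n ℝ} (hM : M.PosSemidef)
    (B : Matrix n m ℝ) : (Bᵀ * M * B).PosSemidef := by
  simpa using hM.conjTranspose_mul_mul_same B

lemma posSemidef_tsum {f : ℕ → Matrix n n ℝ} (hf : Summable f) (h : ∀ t, (f t).PosSemidef) :
    (∑' t, f t).PosSemidef := by
  refine .of_dotProduct_mulVec_nonneg ?_ fun x => ?_
  · rw [IsHermitian, conjTranspose_tsum]
    exact tsum_congr fun t => (h t).1
  · let q : Matrix n n ℝ →+ ℝ := (dotProductBilin ℝ ℝ (star x)).toAddMonoidHom.comp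
      (mulVec.addMonoidHomLeft x)
    have hq : Continuous q :=
      continuous_const.dotProduct (continuous_id.matrix_mulVec continuous_const)
    exact (hf.hasSum.map q hq).nonneg fun t => (h t).dotProduct_mulVec_nonneg x

lemma trace_tsum {f : ℕ → Matrix n n ℝ} (hf : Summable f) :
    (∑' t, f t).trace = ∑' t, (f t).trace :=
  (traceLinearMap n ℝ ℝ).toContinuousLinearMap.map_tsum hf

variable [DecidableEq n]

lemma PosSemidef.trace_mul_nonneg {P S : Matrix n n ℝ} (hP : P.PosSemidef)
    (hS : S.PosSemidef) : 0 ≤ (P * S).trace := by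
  obtain ⟨X, hX, rfl⟩ : ∃ X : Matrix n n ℝ, X.PosSemidef ∧ X * X = P :=
    ⟨CFC.sqrt P, (CFC.sqrt_nonneg P).posSemidef, CFC.sqrt_mul_sqrt_self P hP.nonneg⟩
  rw [mul_assoc, trace_mul_comm, mul_assoc, ← mul_assoc]
  nth_rewrite 1 [← hX.transpose_eq]
  exact (hS.transpose_mul_mul_same X).trace_nonneg

lemma PosSemidef.trace_mul_le_trace_mul {P X Y : Matrix n n ℝ}
    (hP : P.PosSemidef) (hXY : X ≤ Y) : (P * X).trace ≤ (P * Y).trace := by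
  have := hP.trace_mul_nonneg (le_iff.1 hXY)
  rwa [mul_sub, trace_sub, sub_nonneg] at this

lemma IsHermitian.le_norm_smul_one {S : Matrix n n ℝ} (hS : S.IsHermitian) : S ≤ ‖S‖ • 1 := by
  rcases isEmpty_or_nonempty n with hn | hn
  · exact le_of_eq (Subsingleton.elim _ _)
  rw [← Algebra.algebraMap_eq_smul_one, le_algebraMap_iff_spectrum_le (ha := hS.isSelfAdjoint)]
  exact fun x hx => (Real.le_norm_self x).trans (spectrum.norm_le_norm_of_mem hx)

lemma PosDef.inv_le_inv_smul_one {G : Matrix n n ℝ} (hG : G.PosDef) {σ : ℝ} (hσ : 0 < σ)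
    (h : σ • 1 ≤ G) : G⁻¹ ≤ σ⁻¹ • 1 := by
  rw [← Algebra.algebraMap_eq_smul_one] at h ⊢
  rw [le_algebraMap_iff_spectrum_le (ha := hG.inv.1.isSelfAdjoint)]
  intro μ hμ
  let u : (Matrix n n ℝ)ˣ := ((isUnit_iff_isUnit_det G).2 hG.det_pos.ne'.isUnit).unit
  rw [show G⁻¹ = ↑u⁻¹ by rw [coe_units_inv]; rfl] at hμ
  have hμ0 : μ ≠ 0 := fun h0 => spectrum.zero_notMem ℝ u⁻¹.isUnit (h0 ▸ hμ)
  have hμinv : μ⁻¹ ∈ spectrum ℝ G := by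
    refine (spectrum.inv_mem_iff (r := Units.mk0 μ⁻¹ (inv_ne_zero hμ0)) (a := u)).2 ?_
    simpa using hμ
  have hσμ : σ ≤ μ⁻¹ := (algebraMap_le_iff_le_spectrum (ha := hG.1.isSelfAdjoint)).1 h _ hμinv
  exact (le_inv_comm₀ hσ (inv_pos.1 (hσ.trans_le hσμ))).1 hσμ

end Matrix

section sigmaMin

variable {n : Type*} [Fintype n] [DecidableEq n]

lemma sigmaMin_le {A : Matrix n n ℝ} {x : EuclideanSpace ℝ n} (hx : ‖x‖ = 1) :
    sigmaMin A ≤ ‖Matrix.toEuclideanLin A x‖ :=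
  ciInf_le (f := fun x : {x : EuclideanSpace ℝ n // ‖x‖ = 1} => ‖Matrix.toEuclideanLin A x.1‖)
    ⟨0, by rintro _ ⟨y, rfl⟩; exact norm_nonneg _⟩ ⟨x, hx⟩

lemma sigmaMin_smul_one_le {R : Matrix n n ℝ} (hR : R.PosSemidef) : sigmaMin R • 1 ≤ R := by
  rw [← Algebra.algebraMap_eq_smul_one, algebraMap_le_iff_le_spectrum (ha := hR.1.isSelfAdjoint),
    hR.1.spectrum_real_eq_range_eigenvalues]
  rintro _ ⟨i, rfl⟩
  have hb : ‖hR.1.eigenvectorBasis i‖ = 1 := hR.1.eigenvectorBasis.orthonormal.1 i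
  calc sigmaMin R ≤ ‖Matrix.toEuclideanLin R (hR.1.eigenvectorBasis i)‖ := sigmaMin_le hb
    _ = hR.1.eigenvalues i := by
      rw [Matrix.toLpLin_apply, hR.1.mulVec_eigenvectorBasis, WithLp.toLp_smul,
        WithLp.toLp_ofLp, norm_smul, hb, mul_one, Real.norm_of_nonneg (hR.eigenvalues_nonneg i)]

lemma sigmaMin_pos [Nonempty n] {R : Matrix n n ℝ} (hR : IsUnit R.det) : 0 < sigmaMin R := by
  have hRinv : 0 < ‖R⁻¹‖ := norm_pos_iff.2 fun h0 => by
    simpa [h0] using Matrix.nonsing_inv_mul R hR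
  obtain ⟨i⟩ := ‹Nonempty n›
  have : Nonempty {x : EuclideanSpace ℝ n // ‖x‖ = 1} := ⟨⟨EuclideanSpace.single i 1, by simp⟩⟩
  refine (inv_pos.2 hRinv).trans_le (le_ciInf fun ⟨y, hy⟩ => ?_)
  -- `y = R⁻¹ (R y)`, so `1 = ‖y‖ ≤ ‖R⁻¹‖ ‖R y‖`.
  have h := Matrix.l2_opNorm_mulVec R⁻¹ (Matrix.toEuclideanLin R y)
  simp only [Matrix.toLpLin_apply, WithLp.ofLp_toLp, Matrix.mulVec_mulVec,
    Matrix.nonsing_inv_mul R hR, Matrix.one_mulVec] at h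
  rw [inv_le_iff_one_le_mul₀' hRinv]
  simpa [hy, Matrix.toLpLin_apply] using h

end sigmaMin

section Lyapunov

variable {n : Type*} [Fintype n] [DecidableEq n]

def lyapunovSum (γ : ℝ) (C X : Matrix n n ℝ) : Matrix n n ℝ :=
  ∑' t : ℕ, γ ^ t • (Cᵀ ^ t * X * C ^ t)

lemma norm_smul_transpose_pow_mul_mul_pow_le {γ : ℝ} (hγ : 0 ≤ γ) (C X : Matrix n n ℝ) (t : ℕ) :
    ‖γ ^ t • (Cᵀ ^ t * X * C ^ t)‖ ≤ γ ^ t * ‖C ^ t‖ ^ 2 * ‖X‖ := by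
  rw [norm_smul, Real.norm_of_nonneg (pow_nonneg hγ t), mul_assoc (γ ^ t)]
  refine mul_le_mul_of_nonneg_left ?_ (pow_nonneg hγ t)
  calc ‖Cᵀ ^ t * X * C ^ t‖ ≤ ‖Cᵀ ^ t‖ * ‖X‖ * ‖C ^ t‖ :=
        (norm_mul_le _ _).trans (mul_le_mul_of_nonneg_right (norm_mul_le _ _) (norm_nonneg _))
    _ = ‖C ^ t‖ ^ 2 * ‖X‖ := by rw [← Matrix.transpose_pow, Matrix.l2_opNorm_transpose_s10]; ring

lemma smul_transpose_pow_mul_mul_pow_succ (γ : ℝ) (C X : Matrix n n ℝ) (t : ℕ) :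
    γ ^ (t + 1) • (Cᵀ ^ (t + 1) * X * C ^ (t + 1))
      = γ • (Cᵀ * (γ ^ t • (Cᵀ ^ t * X * C ^ t)) * C) := by
  rw [pow_succ γ, pow_succ' Cᵀ, pow_succ C, Matrix.mul_smul, Matrix.smul_mul, smul_smul, mul_comm]
  simp only [Matrix.mul_assoc]

lemma lyapunovSum_eq_add {γ : ℝ} {C X : Matrix n n ℝ}
    (hs : Summable fun t : ℕ => γ ^ t • (Cᵀ ^ t * X * C ^ t)) :
    lyapunovSum γ C X = X + γ • (Cᵀ * lyapunovSum γ C X * C) := by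
  unfold lyapunovSum
  conv_lhs => rw [hs.tsum_eq_zero_add]
  simp only [smul_transpose_pow_mul_mul_pow_succ]
  rw [(hs.mul_left Cᵀ |>.mul_right C).tsum_const_smul, (hs.mul_left Cᵀ).tsum_mul_right,
    hs.tsum_mul_left]
  simp

lemma posSemidef_lyapunovSum {γ : ℝ} (hγ : 0 ≤ γ) {C X : Matrix n n ℝ}
    (hs : Summable fun t : ℕ => γ ^ t • (Cᵀ ^ t * X * C ^ t)) (hX : X.PosSemidef) :
    (lyapunovSum γ C X).PosSemidef :=
  Matrix.posSemidef_tsum hs fun t => by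
    simpa [Matrix.transpose_pow] using
      (hX.transpose_mul_mul_same (C ^ t)).smul (pow_nonneg hγ t)

lemma trace_lyapunovSum_mul {γ : ℝ} {C X S : Matrix n n ℝ}
    (hX : Summable fun t : ℕ => γ ^ t • (Cᵀ ^ t * X * C ^ t))
    (hS : Summable fun t : ℕ => γ ^ t • (Cᵀᵀ ^ t * S * Cᵀ ^ t)) :
    (lyapunovSum γ C X * S).trace = (X * lyapunovSum γ Cᵀ S).trace := by
  rw [lyapunovSum, lyapunovSum, ← hX.tsum_mul_right, ← hS.tsum_mul_left,
    Matrix.trace_tsum (hX.mul_right S), Matrix.trace_tsum (hS.mul_left X)]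
  refine tsum_congr fun t => ?_
  rw [Matrix.transpose_transpose, Matrix.smul_mul, Matrix.mul_smul, Matrix.trace_smul,
    Matrix.trace_smul, Matrix.mul_assoc, Matrix.mul_assoc, Matrix.trace_mul_comm, Matrix.mul_assoc,
    Matrix.mul_assoc]

end Lyapunov

section Stability

variable {dx : ℕ} {γ : ℝ} {C : Matrix (Fin dx) (Fin dx) ℝ}

lemma IsStable.transpose (hC : IsStable γ C) : IsStable γ Cᵀ := by
  obtain ⟨c, hc, r, hr, h⟩ := hC
  refine ⟨c, hc, r, hr, fun t => ?_⟩
  rw [← Matrix.transpose_pow, Matrix.l2_opNorm_transpose_s10]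
  exact h t

lemma IsStable.exists_norm_smul_le (hγ : 0 < γ) (hC : IsStable γ C)
    (X : Matrix (Fin dx) (Fin dx) ℝ) :
    ∃ c ρ : ℝ, 0 ≤ ρ ∧ ρ < 1 ∧ ∀ t : ℕ, ‖γ ^ t • (Cᵀ ^ t * X * C ^ t)‖ ≤ c * ρ ^ t := by
  obtain ⟨c, -, r, ⟨hr0, hr1⟩, h⟩ := hC
  refine ⟨c ^ 2 * ‖X‖, r ^ 2, by positivity, by nlinarith, fun t => ?_⟩
  have hcancel : γ ^ t * (γ ^ (-(t : ℝ) / 2)) ^ 2 = 1 := by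
    rw [← Real.rpow_natCast γ t, ← Real.rpow_natCast _ 2, ← Real.rpow_mul hγ.le,
      ← Real.rpow_add hγ]
    norm_num
  have hsq : ‖C ^ t‖ ^ 2 ≤ (c * r ^ t * γ ^ (-(t : ℝ) / 2)) ^ 2 :=
    pow_le_pow_left₀ (norm_nonneg _) (h t) 2
  calc ‖γ ^ t • (Cᵀ ^ t * X * C ^ t)‖ ≤ γ ^ t * ‖C ^ t‖ ^ 2 * ‖X‖ :=
        norm_smul_transpose_pow_mul_mul_pow_le hγ.le C X t
    _ ≤ γ ^ t * (c * r ^ t * γ ^ (-(t : ℝ) / 2)) ^ 2 * ‖X‖ := by gcongr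
    _ = c ^ 2 * ‖X‖ * (r ^ 2) ^ t * (γ ^ t * (γ ^ (-(t : ℝ) / 2)) ^ 2) := by ring
    _ = c ^ 2 * ‖X‖ * (r ^ 2) ^ t := by rw [hcancel, mul_one]

lemma IsStable.summable (hγ : 0 < γ) (hC : IsStable γ C) (X : Matrix (Fin dx) (Fin dx) ℝ) :
    Summable fun t : ℕ => γ ^ t • (Cᵀ ^ t * X * C ^ t) := by
  obtain ⟨c, ρ, hρ0, hρ1, h⟩ := hC.exists_norm_smul_le hγ X
  exact .of_norm_bounded ((summable_geometric_of_lt_one hρ0 hρ1).mul_left c) h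

lemma IsStable.tendsto_zero (hγ : 0 < γ) (hC : IsStable γ C) (X : Matrix (Fin dx) (Fin dx) ℝ) :
    Filter.Tendsto (fun t : ℕ => γ ^ t • (Cᵀ ^ t * X * C ^ t)) Filter.atTop (nhds 0) := by
  obtain ⟨c, ρ, hρ0, hρ1, h⟩ := hC.exists_norm_smul_le hγ X
  refine squeeze_zero_norm h ?_
  simpa using (tendsto_pow_atTop_nhds_zero_of_lt_one hρ0 hρ1).const_mul c

lemma IsStable.eq_lyapunovSum (hγ : 0 < γ) (hC : IsStable γ C) {X Y : Matrix (Fin dx) (Fin dx) ℝ}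
    (hY : Y = X + γ • (Cᵀ * Y * C)) : Y = lyapunovSum γ C X := by
  have hZ : Y - lyapunovSum γ C X = γ • (Cᵀ * (Y - lyapunovSum γ C X) * C) := by
    nth_rewrite 1 [hY, lyapunovSum_eq_add (hC.summable hγ X)]
    simp only [Matrix.mul_sub, Matrix.sub_mul, smul_sub]
    abel
  rw [← sub_eq_zero]
  generalize Y - lyapunovSum γ C X = Z at hZ ⊢
  have hZt : ∀ t : ℕ, γ ^ t • (Cᵀ ^ t * Z * C ^ t) = Z := by
    intro t
    induction t with
    | zero => simp
    | succ t ih => rw [smul_transpose_pow_mul_mul_pow_succ, ih, ← hZ]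
  exact tendsto_nhds_unique (by simp only [hZt]; exact tendsto_const_nhds) (hC.tendsto_zero hγ Z)

lemma IsStable.lyapunovSum_sub (hγ : 0 < γ) (hC : IsStable γ C) (X P : Matrix (Fin dx) (Fin dx) ℝ) :
    lyapunovSum γ C X - P = lyapunovSum γ C (X + γ • (Cᵀ * P * C) - P) := by
  refine hC.eq_lyapunovSum hγ ?_
  conv_lhs => rw [lyapunovSum_eq_add (hC.summable hγ X)]
  simp only [Matrix.mul_sub, Matrix.sub_mul, smul_sub]
  abel

end Stability

section Quadratic

variable {m n : Type*} [Fintype m] [DecidableEq m] [Fintype n] [DecidableEq n]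

lemma trace_mul_transpose_mul_inv_mul_le {S : Matrix n n ℝ} {R G : Matrix m m ℝ}
    (hS : S.PosSemidef) (hR : R.PosDef) (hRG : R ≤ G) (E : Matrix m n ℝ) :
    (S * Eᵀ * G⁻¹ * E).trace ≤ ‖S‖ / sigmaMin R * (Eᵀ * E).trace := by
  rcases isEmpty_or_nonempty m with hm | hm
  -- Here `sigmaMin R` is the junk value `0` (an infimum over no unit vectors), but `E = 0`.
  · obtain rfl : E = 0 := Subsingleton.elim _ _
    simp
  have hσ : 0 < sigmaMin R := sigmaMin_pos hR.det_pos.ne'.isUnit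
  have hG : G.PosDef := by simpa using hR.add_posSemidef hRG
  have hGinv : G⁻¹ ≤ (sigmaMin R)⁻¹ • 1 :=
    hG.inv_le_inv_smul_one hσ ((sigmaMin_smul_one_le hR.posSemidef).trans hRG)
  have hEGE : Eᵀ * G⁻¹ * E ≤ (sigmaMin R)⁻¹ • (Eᵀ * E) := by
    simpa [Matrix.le_iff, Matrix.mul_sub, Matrix.sub_mul] using
      (Matrix.le_iff.1 hGinv).transpose_mul_mul_same E
  have hEE : (Eᵀ * E).PosSemidef := by simpa using Matrix.posSemidef_conjTranspose_mul_self E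
  calc (S * Eᵀ * G⁻¹ * E).trace = (S * (Eᵀ * G⁻¹ * E)).trace := by simp only [Matrix.mul_assoc]
    _ ≤ (S * ((sigmaMin R)⁻¹ • (Eᵀ * E))).trace := hS.trace_mul_le_trace_mul hEGE
    _ = (sigmaMin R)⁻¹ * (Eᵀ * E * S).trace := by
      rw [Matrix.mul_smul, Matrix.trace_smul, Matrix.trace_mul_comm, smul_eq_mul]
    _ ≤ (sigmaMin R)⁻¹ * (Eᵀ * E * (‖S‖ • 1)).trace := by
      gcongr
      exact hEE.trace_mul_le_trace_mul hS.isHermitian.le_norm_smul_one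
    _ = ‖S‖ / sigmaMin R * (Eᵀ * E).trace := by
      rw [Matrix.mul_smul, Matrix.mul_one, Matrix.trace_smul, smul_eq_mul]; ring

omit [Fintype n] [DecidableEq n] in
lemma transpose_mul_mul_completing_square {G : Matrix m m ℝ} (hG : IsUnit G.det)
    (hGt : Gᵀ = G) (D E : Matrix m n ℝ) :
    Dᵀ * G * D + Dᵀ * E + Eᵀ * D = (D + G⁻¹ * E)ᵀ * G * (D + G⁻¹ * E) - Eᵀ * G⁻¹ * E := by
  have hGinvt : (G⁻¹)ᵀ = G⁻¹ := by rw [Matrix.transpose_nonsing_inv, hGt]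
  simp only [Matrix.transpose_add, Matrix.transpose_mul, hGinvt, Matrix.add_mul,
    Matrix.mul_add, Matrix.mul_assoc, Matrix.mul_nonsing_inv_cancel_left _ _ hG,
    Matrix.nonsing_inv_mul_cancel_left _ _ hG]
  abel

end Quadratic

section LQR

variable {dx du : ℕ} {γ : ℝ} {A : Matrix (Fin dx) (Fin dx) ℝ} {B : Matrix (Fin dx) (Fin du) ℝ}
  {Q : Matrix (Fin dx) (Fin dx) ℝ} {R : Matrix (Fin du) (Fin du) ℝ}
  {S1 : Matrix (Fin dx) (Fin dx) ℝ} {θ θs : Matrix (Fin du) (Fin dx) ℝ}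

def bellmanOp (γ : ℝ) (A : Matrix (Fin dx) (Fin dx) ℝ) (B : Matrix (Fin dx) (Fin du) ℝ)
    (Q : Matrix (Fin dx) (Fin dx) ℝ) (R : Matrix (Fin du) (Fin du) ℝ)
    (θ : Matrix (Fin du) (Fin dx) ℝ) (P : Matrix (Fin dx) (Fin dx) ℝ) :
    Matrix (Fin dx) (Fin dx) ℝ :=
  Q + θᵀ * R * θ + γ • ((Cl A B θ)ᵀ * P * Cl A B θ)

lemma Mmat_eq_lyapunovSum : Mmat γ A B Q R θ = lyapunovSum γ (Cl A B θ) (Q + θᵀ * R * θ) := rfl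

lemma SigMat_eq_smul_lyapunovSum :
    SigMat γ A B S1 θ = (1 - γ) • lyapunovSum γ (Cl A B θ)ᵀ S1 := rfl

lemma posSemidef_Mmat (hγ : 0 < γ) (hQ : Q.PosSemidef) (hR : R.PosSemidef)
    (hθ : IsStable γ (Cl A B θ)) : (Mmat γ A B Q R θ).PosSemidef :=
  posSemidef_lyapunovSum hγ.le (hθ.summable hγ _) (hQ.add (hR.transpose_mul_mul_same θ))

lemma posSemidef_SigMat (hγ : γ ∈ Set.Ioo (0 : ℝ) 1) (hS1 : S1.PosSemidef)
    (hθ : IsStable γ (Cl A B θ)) : (SigMat γ A B S1 θ).PosSemidef :=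
  (posSemidef_lyapunovSum hγ.1.le (hθ.transpose.summable hγ.1 _) hS1).smul (sub_nonneg.2 hγ.2.le)

lemma Jcost_eq_add_trace (hγ : 0 < γ) (hθ : IsStable γ (Cl A B θ))
    (P : Matrix (Fin dx) (Fin dx) ℝ) :
    Jcost γ A B Q R S1 θ = (1 - γ) * (P * S1).trace
      + ((bellmanOp γ A B Q R θ P - P) * SigMat γ A B S1 θ).trace := by
  rw [SigMat_eq_smul_lyapunovSum, Matrix.mul_smul, Matrix.trace_smul, smul_eq_mul,
    ← trace_lyapunovSum_mul (hθ.summable hγ _) (hθ.transpose.summable hγ _),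
    bellmanOp, ← hθ.lyapunovSum_sub hγ, ← Mmat_eq_lyapunovSum, Jcost, Matrix.sub_mul,
    Matrix.trace_sub]
  ring

lemma bellmanOp_sub_bellmanOp (hR : Rᵀ = R) {M : Matrix (Fin dx) (Fin dx) ℝ} (hM : Mᵀ = M) :
    bellmanOp γ A B Q R θs M - bellmanOp γ A B Q R θ M
      = (θs - θ)ᵀ * (R + γ • (Bᵀ * M * B)) * (θs - θ)
      + (θs - θ)ᵀ * ((R + γ • (Bᵀ * M * B)) * θ - γ • (Bᵀ * M * A))
      + ((R + γ • (Bᵀ * M * B)) * θ - γ • (Bᵀ * M * A))ᵀ * (θs - θ) := by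
  simp only [bellmanOp, Cl, Matrix.transpose_sub, Matrix.transpose_transpose, Matrix.transpose_add,
    Matrix.transpose_mul, Matrix.transpose_smul, hR, hM, Matrix.sub_mul, Matrix.mul_sub,
    Matrix.add_mul, Matrix.mul_add, Matrix.smul_mul, Matrix.mul_smul, Matrix.mul_assoc, smul_sub]
  abel

lemma Jcost_sub_Jcost_le (hγ : γ ∈ Set.Ioo (0 : ℝ) 1) (hR : Rᵀ = R) (hS1 : S1.PosSemidef)
    (hθ : IsStable γ (Cl A B θ)) (hθs : IsStable γ (Cl A B θs))
    (hM : (Mmat γ A B Q R θ)ᵀ = Mmat γ A B Q R θ)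
    (hG : (R + γ • (Bᵀ * Mmat γ A B Q R θ * B)).PosDef) :
    Jcost γ A B Q R S1 θ - Jcost γ A B Q R S1 θs
      ≤ (SigMat γ A B S1 θs * (Emat γ A B Q R θ)ᵀ *
          (R + γ • (Bᵀ * Mmat γ A B Q R θ * B))⁻¹ * Emat γ A B Q R θ).trace := by
  set M := Mmat γ A B Q R θ
  set G := R + γ • (Bᵀ * M * B)
  set E := Emat γ A B Q R θ
  set W := θs - θ + G⁻¹ * E
  have hfix : bellmanOp γ A B Q R θ M = M := (lyapunovSum_eq_add (hθ.summable hγ.1 _)).symm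
  have hgap : bellmanOp γ A B Q R θs M - M = Wᵀ * G * W - Eᵀ * G⁻¹ * E := by
    nth_rewrite 2 [← hfix]
    rw [bellmanOp_sub_bellmanOp hR hM]
    exact transpose_mul_mul_completing_square hG.det_pos.ne'.isUnit
      hG.posSemidef.transpose_eq _ _
  have hcost := Jcost_eq_add_trace (Q := Q) (R := R) (S1 := S1) hγ.1 hθs M
  have hsq := (hG.posSemidef.transpose_mul_mul_same W).trace_mul_nonneg
    (posSemidef_SigMat hγ hS1 hθs)
  have hcycle : (Eᵀ * G⁻¹ * E * SigMat γ A B S1 θs).trace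
      = (SigMat γ A B S1 θs * Eᵀ * G⁻¹ * E).trace := by
    rw [Matrix.trace_mul_comm]; simp only [Matrix.mul_assoc]
  rw [hcost, hgap, Jcost, Matrix.sub_mul, Matrix.trace_sub]
  linarith

end LQR

theorem gradient_domination_core_general
    {dx du : ℕ} (γ : ℝ) (hγ : γ ∈ Set.Ioo (0:ℝ) 1)
    (A : Matrix (Fin dx) (Fin dx) ℝ) (B : Matrix (Fin dx) (Fin du) ℝ)
    (Q : Matrix (Fin dx) (Fin dx) ℝ) (R : Matrix (Fin du) (Fin du) ℝ)
    (S1 : Matrix (Fin dx) (Fin dx) ℝ)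
    (hR : Rᵀ = R)
    (hQpsd : Q.PosSemidef) (hRpd : R.PosDef) (hS1 : S1.PosSemidef)
    (θ θs : Matrix (Fin du) (Fin dx) ℝ)
    (hθ : IsStable γ (Cl A B θ)) (hθs : IsStable γ (Cl A B θs)) :
    (R + γ • (Bᵀ * Mmat γ A B Q R θ * B)).PosDef
    ∧ Jcost γ A B Q R S1 θ - Jcost γ A B Q R S1 θs
        ≤ (SigMat γ A B S1 θs * (Emat γ A B Q R θ)ᵀ *
            (R + γ • (Bᵀ * Mmat γ A B Q R θ * B))⁻¹ * Emat γ A B Q R θ).trace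
    ∧ (SigMat γ A B S1 θs * (Emat γ A B Q R θ)ᵀ *
          (R + γ • (Bᵀ * Mmat γ A B Q R θ * B))⁻¹ * Emat γ A B Q R θ).trace
        ≤ ‖SigMat γ A B S1 θs‖ / sigmaMin R *
            ((Emat γ A B Q R θ)ᵀ * Emat γ A B Q R θ).trace := by
  have hM := posSemidef_Mmat hγ.1 hQpsd hRpd.posSemidef hθ
  have hBMB : (γ • (Bᵀ * Mmat γ A B Q R θ * B)).PosSemidef :=
    (hM.transpose_mul_mul_same B).smul hγ.1.le
  have hG : (R + γ • (Bᵀ * Mmat γ A B Q R θ * B)).PosDef := hRpd.add_posSemidef hBMB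
  refine ⟨hG, Jcost_sub_Jcost_le hγ hR hS1 hθ hθs hM.transpose_eq hG, ?_⟩
  refine trace_mul_transpose_mul_inv_mul_le (posSemidef_SigMat hγ hS1 hθs) hRpd ?_ _
  simpa [Matrix.le_iff] using hBMB

/-- Gradient domination core inequality: with `Q` positive semidefinite,
`R` positive definite and `Σ₁` positive semidefinite, for stable gains `θ, θ*`, the matrix
`G = R + γ Bᵀ M(θ) B` is positive definite and
`J(θ) − J(θ*) ≤ tr(Σ_{θ*} E_θᵀ G⁻¹ E_θ) ≤ (‖Σ_{θ*}‖ / σ_min(R)) tr(E_θᵀ E_θ)`. -/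
theorem gradient_domination_core
    {dx du : ℕ} (γ : ℝ) (hγ : γ ∈ Set.Ioo (0:ℝ) 1)
    (A : Matrix (Fin dx) (Fin dx) ℝ) (B : Matrix (Fin dx) (Fin du) ℝ)
    (Q : Matrix (Fin dx) (Fin dx) ℝ) (R : Matrix (Fin du) (Fin du) ℝ)
    (S1 : Matrix (Fin dx) (Fin dx) ℝ)
    (hQ : Qᵀ = Q) (hR : Rᵀ = R)
    (hQpsd : Q.PosSemidef) (hRpd : R.PosDef) (hS1 : S1.PosSemidef)
    (θ θs : Matrix (Fin du) (Fin dx) ℝ)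
    (hθ : IsStable γ (Cl A B θ)) (hθs : IsStable γ (Cl A B θs)) :
    (R + γ • (Bᵀ * Mmat γ A B Q R θ * B)).PosDef
    ∧ Jcost γ A B Q R S1 θ - Jcost γ A B Q R S1 θs
        ≤ (SigMat γ A B S1 θs * (Emat γ A B Q R θ)ᵀ *
            (R + γ • (Bᵀ * Mmat γ A B Q R θ * B))⁻¹ * Emat γ A B Q R θ).trace
    ∧ (SigMat γ A B S1 θs * (Emat γ A B Q R θ)ᵀ *
          (R + γ • (Bᵀ * Mmat γ A B Q R θ * B))⁻¹ * Emat γ A B Q R θ).trace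
        ≤ ‖SigMat γ A B S1 θs‖ / sigmaMin R *
            ((Emat γ A B Q R θ)ᵀ * Emat γ A B Q R θ).trace :=
  gradient_domination_core_general γ hγ A B Q R S1 hR hQpsd hRpd hS1 θ θs hθ hθs
end
end
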